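/- arXiv:1807.11863 — 2 statements merged into one kernel-verified Lean document; each statement's English description precedes it below -/
import Mathlib

section
/- Let β: ℕ → [0,∞) satisfy β(j) ≤ C_β b^j for b ∈ (0,1), let H, δ > 0 with δ ≤ 1 and H ≤ max{δ², C²δ} for a constant C ≥ 1. Then Σ_{j=1}^{∞} min{ δ, 4 H^{1/2} β(j)^{1/2} } ≤ C̄ δ (1 + |log δ|) for a constant C̄ depending only on C, C_β, b. -/
/-!
Since `H ≤ C² δ`, the `j`-th term is at most both `δ` and `K √δ (√b) ^ j` with `K = 4 C √Cβ √b`.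
The geometric bound drops below `δ` from an index `N ≈ log (K / √δ) / log (1 / √b)`, which is
`O(1 + |log δ|)`; the first `N` terms contribute at most `N δ` and the rest a geometric series
bounded by `δ / (1 - √b)`.
-/

open Real

lemma exists_mul_pow_le_of_lt_one {r : ℝ} (hr0 : 0 < r) (hr1 : r < 1) (M : ℝ) {a : ℝ}
    (ha : 0 < a) : ∃ N : ℕ, M * r ^ N ≤ a ∧ (N : ℝ) ≤ |log (M / a)| / -log r + 1 := by
  have hL : 0 < -log r := neg_pos.mpr (log_neg hr0 hr1)
  by_cases hMa : M ≤ a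
  · exact ⟨0, by simpa using hMa, by simp only [Nat.cast_zero]; positivity⟩
  replace hMa := not_le.mp hMa
  have hM : 0 < M := ha.trans hMa
  have hx : 0 ≤ log (M / a) / -log r :=
    div_nonneg (log_nonneg ((one_le_div ha).mpr hMa.le)) hL.le
  set N := ⌈log (M / a) / -log r⌉₊
  refine ⟨N, ?_, ?_⟩
  · have hcross : log (M / a) ≤ N * -log r := (div_le_iff₀ hL).mp (Nat.le_ceil _)
    have hpow : r ^ N ≤ a / M := by
      rw [pow_le_iff_le_log hr0 (div_pos ha hM), ← inv_div, log_inv]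
      linarith
    calc M * r ^ N ≤ M * (a / M) := mul_le_mul_of_nonneg_left hpow hM.le
      _ = a := by field_simp
  · calc (N : ℝ) ≤ log (M / a) / -log r + 1 := (Nat.ceil_lt_add_one hx).le
      _ ≤ |log (M / a)| / -log r + 1 := by gcongr; exact le_abs_self _

lemma tsum_le_of_le_of_le_mul_pow {f : ℕ → ℝ} {a M r : ℝ} (N : ℕ) (hr0 : 0 ≤ r) (hr1 : r < 1)
    (hf0 : ∀ j, 0 ≤ f j) (hfa : ∀ j, f j ≤ a) (hfM : ∀ j, f j ≤ M * r ^ j)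
    (hN : M * r ^ N ≤ a) : ∑' j, f j ≤ (N + (1 - r)⁻¹) * a := by
  have hf : Summable f :=
    .of_nonneg_of_le hf0 hfM ((summable_geometric_of_lt_one hr0 hr1).mul_left M)
  have hhead : ∑ j ∈ Finset.range N, f j ≤ N * a := by
    simpa using Finset.sum_le_sum fun j (_ : j ∈ Finset.range N) => hfa j
  have htail : ∑' i, f (i + N) ≤ a * (1 - r)⁻¹ := by
    have hle : ∀ i, f (i + N) ≤ a * r ^ i := fun i =>
      calc f (i + N) ≤ M * r ^ N * r ^ i := by rw [mul_assoc, ← pow_add, add_comm N]; exact hfM _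
        _ ≤ a * r ^ i := mul_le_mul_of_nonneg_right hN (pow_nonneg hr0 i)
    rw [← tsum_geometric_of_lt_one hr0 hr1, ← tsum_mul_left]
    exact Summable.tsum_le_tsum hle ((summable_nat_add_iff N).mpr hf)
      ((summable_geometric_of_lt_one hr0 hr1).mul_left a)
  rw [← hf.sum_add_tsum_nat_add N]
  linarith

lemma abs_log_mul_sqrt_div_le (K : ℝ) {δ : ℝ} (hδ : 0 < δ) :
    |log (K * √δ / δ)| ≤ |log K| + |log δ| / 2 := by
  rcases eq_or_ne K 0 with rfl | hK
  · simp only [zero_mul, zero_div, log_zero, abs_zero]; positivity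
  have hsqrt : 0 < √δ := sqrt_pos.mpr hδ
  rw [log_div (mul_ne_zero hK hsqrt.ne') hδ.ne', log_mul hK hsqrt.ne', log_sqrt hδ.le,
    show log K + log δ / 2 - log δ = log K - log δ / 2 by ring]
  calc |log K - log δ / 2| ≤ |log K| + |log δ / 2| := abs_sub _ _
    _ = |log K| + |log δ| / 2 := by rw [abs_div, abs_two]

lemma tsum_le_of_le_of_le_sqrt_mul_pow {r : ℝ} (hr0 : 0 < r) (hr1 : r < 1) (K : ℝ) {δ : ℝ}
    (hδ : 0 < δ) {f : ℕ → ℝ} (hf0 : ∀ j, 0 ≤ f j) (hfδ : ∀ j, f j ≤ δ)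
    (hfK : ∀ j, f j ≤ K * √δ * r ^ j) :
    ∑' j, f j ≤ (1 + (1 - r)⁻¹ + (|log K| + 1 / 2) / -log r) * δ * (1 + |log δ|) := by
  have hL : 0 < -log r := neg_pos.mpr (log_neg hr0 hr1)
  obtain ⟨N, hN, hNle⟩ := exists_mul_pow_le_of_lt_one hr0 hr1 (K * √δ) hδ
  have hN' : (N : ℝ) ≤ 1 + |log K| / -log r + 1 / 2 / -log r * |log δ| := by
    have := abs_log_mul_sqrt_div_le K hδ
    calc (N : ℝ) ≤ |log (K * √δ / δ)| / -log r + 1 := hNle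
      _ ≤ (|log K| + |log δ| / 2) / -log r + 1 := by gcongr
      _ = 1 + |log K| / -log r + 1 / 2 / -log r * |log δ| := by ring
  have hB : 0 ≤ 1 / 2 / -log r := by positivity
  have hA : 0 ≤ 1 + (1 - r)⁻¹ + |log K| / -log r := by
    have : 0 < 1 - r := by linarith
    positivity
  calc ∑' j, f j ≤ (N + (1 - r)⁻¹) * δ :=
        tsum_le_of_le_of_le_mul_pow N hr0.le hr1 hf0 hfδ hfK hN
    _ ≤ ((1 + (1 - r)⁻¹ + |log K| / -log r) + 1 / 2 / -log r * |log δ|) * δ := by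
        exact mul_le_mul_of_nonneg_right (by linarith) hδ.le
    _ ≤ (1 + (1 - r)⁻¹ + (|log K| + 1 / 2) / -log r) * δ * (1 + |log δ|) := by
        have := abs_nonneg (log δ)
        rw [add_div, ← add_assoc, add_mul _ _ δ, mul_assoc, mul_add, mul_one]
        nlinarith [mul_nonneg (mul_nonneg hA hδ.le) this, mul_nonneg hB hδ.le]

lemma sqrt_le_mul_sqrt_of_le_max {C δ H : ℝ} (hC : 1 ≤ C) (hδ : 0 ≤ δ) (hδ1 : δ ≤ 1)
    (hH : H ≤ max (δ ^ 2) (C ^ 2 * δ)) : √H ≤ C * √δ := by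
  have hmax : max (δ ^ 2) (C ^ 2 * δ) = C ^ 2 * δ := by
    refine max_eq_right ?_
    rw [sq]
    exact mul_le_mul_of_nonneg_right (hδ1.trans (one_le_pow₀ hC)) hδ
  rw [hmax] at hH
  calc √H ≤ √(C ^ 2 * δ) := sqrt_le_sqrt hH
    _ = C * √δ := by rw [sqrt_mul (sq_nonneg C), sqrt_sq (by linarith)]

lemma sqrt_le_sqrt_mul_sqrt_pow {x c b : ℝ} {j : ℕ} (hb : 0 ≤ b) (hx : x ≤ c * b ^ j) :
    √x ≤ √c * √b ^ j := by
  have hpow : b ^ j = (√b ^ j) ^ 2 := by rw [← pow_mul, mul_comm, pow_mul, sq_sqrt hb]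
  calc √x ≤ √(c * b ^ j) := sqrt_le_sqrt hx
    _ = √c * √b ^ j := by
        rw [sqrt_mul' c (pow_nonneg hb j), hpow, sqrt_sq (pow_nonneg (sqrt_nonneg b) j)]

theorem stmt12_general (C Cβ b : ℝ) (βc : ℕ → ℝ) (hC : 1 ≤ C)
    (hb0 : 0 < b) (hb1 : b < 1)
    (hβ : ∀ j, βc j ≤ Cβ * b ^ j) :
    ∃ Cbar : ℝ, 0 < Cbar ∧ ∀ δ H : ℝ, 0 < δ → δ ≤ 1 → 0 < H →
      H ≤ max (δ ^ 2) (C ^ 2 * δ) →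
      ∑' j : ℕ, min δ (4 * Real.sqrt H * Real.sqrt (βc (j + 1)))
        ≤ Cbar * δ * (1 + |Real.log δ|) := by
  set r := √b
  set K := 4 * C * √Cβ * √b
  have hr0 : 0 < r := sqrt_pos.mpr hb0
  have hr1 : r < 1 := sqrt_one ▸ sqrt_lt_sqrt hb0.le hb1
  have hL : 0 < -log r := neg_pos.mpr (log_neg hr0 hr1)
  have h1r : 0 < 1 - r := by linarith
  refine ⟨1 + (1 - r)⁻¹ + (|log K| + 1 / 2) / -log r, by positivity,
    fun δ H hδ hδ1 _ hH => tsum_le_of_le_of_le_sqrt_mul_pow hr0 hr1 K hδ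
      (fun j => le_min hδ.le (by positivity)) (fun j => min_le_left _ _) fun j => ?_⟩
  calc min δ (4 * √H * √(βc (j + 1))) ≤ 4 * √H * √(βc (j + 1)) := min_le_right _ _
    _ ≤ 4 * (C * √δ) * (√Cβ * r ^ (j + 1)) := by
        gcongr
        exacts [sqrt_le_mul_sqrt_of_le_max hC hδ.le hδ1 hH,
          sqrt_le_sqrt_mul_sqrt_pow hb0.le (hβ (j + 1))]
    _ = K * √δ * r ^ j := by ring

/-- series estimate: Σⱼ min{δ, 4√H √β(j)} ≤ C̄ δ (1 + |log δ|)
whenever H ≤ max{δ², C²δ} and β decays exponentially. -/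
theorem stmt12 (C Cβ b : ℝ) (βc : ℕ → ℝ) (hC : 1 ≤ C) (hCβ : 0 < Cβ)
    (hb0 : 0 < b) (hb1 : b < 1)
    (hβ0 : ∀ j, 0 ≤ βc j) (hβ : ∀ j, βc j ≤ Cβ * b ^ j) :
    ∃ Cbar : ℝ, 0 < Cbar ∧ ∀ δ H : ℝ, 0 < δ → δ ≤ 1 → 0 < H →
      H ≤ max (δ ^ 2) (C ^ 2 * δ) →
      ∑' j : ℕ, min δ (4 * Real.sqrt H * Real.sqrt (βc (j + 1)))
        ≤ Cbar * δ * (1 + |Real.log δ|) :=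
  stmt12_general C Cβ b βc hC hb0 hb1 hβ
end

section
/- Let β: ℕ → [0,∞) satisfy β(m) ≤ C_β b^m with b ∈ (0,1). Then for any T ≥ 1, T^{-4} Σ_{t₁,t₂,s₁,s₂ = 1}^{T} β(⌊m(t₁,t₂,s₁,s₂)/4⌋) ≤ C/T³ for a constant C depending only on C_β and b, where m(t₁,t₂,s₁,s₂) denotes the maximal pairwise distance among the four indices. -/
/-! Put r = b^(1/12). Each of the distances from t₁ to t₂, s₁, s₂ is at most m, so
b^⌊m/4⌋ ≤ b⁻¹ r^(3m) ≤ b⁻¹ r^d(t₁,t₂) r^d(t₁,s₁) r^d(t₁,s₂). Summed over t₂, s₁, s₂ this factorises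
into three sums ∑ₛ r^d(t₁,s), each at most 2/(1-r) because a distance is attained by at most two
indices; the remaining sum over t₁ contributes the factor T. -/

/-- Maximal pairwise distance among four natural-number indices. -/
def maxDist4 (t₁ t₂ s₁ s₂ : ℕ) : ℕ :=
  max (max (max (Nat.dist t₁ t₂) (Nat.dist t₁ s₁)) (max (Nat.dist t₁ s₂) (Nat.dist t₂ s₁)))
    (max (Nat.dist t₂ s₂) (Nat.dist s₁ s₂))

open Finset

theorem sum_pow_dist_le {r : ℝ} (hr0 : 0 ≤ r) (hr1 : r < 1) (S : Finset ℕ) (t : ℕ) :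
    ∑ s ∈ S, r ^ Nat.dist t s ≤ 2 / (1 - r) := by
  have hfiber (j : ℕ) : #{s ∈ S | Nat.dist t s = j} ≤ 2 :=
    (card_le_card (t := {t - j, t + j}) fun s hs => by
      rw [mem_filter, Nat.dist] at hs; rw [mem_insert, mem_singleton]; omega).trans card_le_two
  calc ∑ s ∈ S, r ^ Nat.dist t s
      = ∑ j ∈ S.image (Nat.dist t), #{s ∈ S | Nat.dist t s = j} • r ^ j := sum_comp _ _
    _ ≤ ∑ j ∈ S.image (Nat.dist t), 2 * r ^ j := by
        gcongr with j; rw [nsmul_eq_mul]; gcongr; exact_mod_cast hfiber j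
    _ ≤ 2 * ∑' j, r ^ j := by
        rw [← mul_sum]
        gcongr
        exact (summable_geometric_of_lt_one hr0 hr1).sum_le_tsum _ fun j _ => by positivity
    _ = 2 / (1 - r) := by rw [tsum_geometric_of_lt_one hr0 hr1, div_eq_mul_inv]

theorem sum_sum_sum_pow_dist_le {r : ℝ} (hr0 : 0 ≤ r) (hr1 : r < 1) (S : Finset ℕ) (t : ℕ) :
    ∑ t₂ ∈ S, ∑ s₁ ∈ S, ∑ s₂ ∈ S, r ^ (Nat.dist t t₂ + Nat.dist t s₁ + Nat.dist t s₂)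
      ≤ (2 / (1 - r)) ^ 3 := by
  calc ∑ t₂ ∈ S, ∑ s₁ ∈ S, ∑ s₂ ∈ S, r ^ (Nat.dist t t₂ + Nat.dist t s₁ + Nat.dist t s₂)
      = (∑ s ∈ S, r ^ Nat.dist t s) ^ 3 := by
        rw [pow_three, sum_mul_sum, sum_mul_sum]
        simp only [mul_sum, pow_add, mul_assoc]
    _ ≤ (2 / (1 - r)) ^ 3 :=
        pow_le_pow_left₀ (sum_nonneg fun _ _ => by positivity) (sum_pow_dist_le hr0 hr1 S t) 3

theorem dist_add_dist_add_dist_le_maxDist4 (t₁ t₂ s₁ s₂ : ℕ) :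
    Nat.dist t₁ t₂ + Nat.dist t₁ s₁ + Nat.dist t₁ s₂ ≤ 3 * maxDist4 t₁ t₂ s₁ s₂ := by
  simp only [maxDist4]; omega

theorem pow_twelve_pow_div_four_le {r : ℝ} (hr0 : 0 < r) (hr1 : r ≤ 1) (m : ℕ) :
    (r ^ 12) ^ (m / 4) ≤ (r ^ 12)⁻¹ * r ^ (3 * m) := by
  rw [le_inv_mul_iff₀ (by positivity), ← pow_succ', ← pow_mul]
  exact pow_le_pow_of_le_one hr0.le hr1 (by omega)

theorem sum_maxDist4_le {Cβ r : ℝ} {βc : ℕ → ℝ} (hCβ : 0 ≤ Cβ) (hr0 : 0 < r) (hr1 : r < 1)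
    (hβ : ∀ m, βc m ≤ Cβ * (r ^ 12) ^ m) (S : Finset ℕ) :
    ∑ t₁ ∈ S, ∑ t₂ ∈ S, ∑ s₁ ∈ S, ∑ s₂ ∈ S, βc (maxDist4 t₁ t₂ s₁ s₂ / 4)
      ≤ #S * (Cβ * (r ^ 12)⁻¹ * (2 / (1 - r)) ^ 3) := by
  have hpoint (t₁ t₂ s₁ s₂ : ℕ) : βc (maxDist4 t₁ t₂ s₁ s₂ / 4)
      ≤ Cβ * (r ^ 12)⁻¹ * r ^ (Nat.dist t₁ t₂ + Nat.dist t₁ s₁ + Nat.dist t₁ s₂) :=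
    calc βc (maxDist4 t₁ t₂ s₁ s₂ / 4)
        ≤ Cβ * ((r ^ 12)⁻¹ * r ^ (3 * maxDist4 t₁ t₂ s₁ s₂)) :=
          (hβ _).trans (by gcongr; exact pow_twelve_pow_div_four_le hr0 hr1.le _)
      _ ≤ Cβ * ((r ^ 12)⁻¹ * r ^ (Nat.dist t₁ t₂ + Nat.dist t₁ s₁ + Nat.dist t₁ s₂)) := by
          gcongr Cβ * (_ * ?_)
          exact pow_le_pow_of_le_one hr0.le hr1.le (dist_add_dist_add_dist_le_maxDist4 ..)
      _ = _ := (mul_assoc _ _ _).symm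
  calc ∑ t₁ ∈ S, ∑ t₂ ∈ S, ∑ s₁ ∈ S, ∑ s₂ ∈ S, βc (maxDist4 t₁ t₂ s₁ s₂ / 4)
      ≤ ∑ t₁ ∈ S, Cβ * (r ^ 12)⁻¹ *
          ∑ t₂ ∈ S, ∑ s₁ ∈ S, ∑ s₂ ∈ S, r ^ (Nat.dist t₁ t₂ + Nat.dist t₁ s₁ + Nat.dist t₁ s₂) := by
        simp only [mul_sum]
        gcongr
        apply hpoint
    _ ≤ ∑ t₁ ∈ S, Cβ * (r ^ 12)⁻¹ * (2 / (1 - r)) ^ 3 := by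
        gcongr
        exact sum_sum_sum_pow_dist_le hr0.le hr1 S _
    _ = #S * (Cβ * (r ^ 12)⁻¹ * (2 / (1 - r)) ^ 3) := by rw [sum_const, nsmul_eq_mul]

theorem stmt14_general (Cβ b : ℝ) (βc : ℕ → ℝ) (hCβ : 0 < Cβ) (hb0 : 0 < b) (hb1 : b < 1)
    (hβ : ∀ m, βc m ≤ Cβ * b ^ m) :
    ∃ C : ℝ, 0 < C ∧ ∀ T : ℕ, 1 ≤ T →
      (1 / (T : ℝ) ^ 4) * ∑ t₁ ∈ Finset.Icc 1 T, ∑ t₂ ∈ Finset.Icc 1 T,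
          ∑ s₁ ∈ Finset.Icc 1 T, ∑ s₂ ∈ Finset.Icc 1 T,
            βc (maxDist4 t₁ t₂ s₁ s₂ / 4)
        ≤ C / (T : ℝ) ^ 3 := by
  set r : ℝ := b ^ (12⁻¹ : ℝ)
  have hr0 : 0 < r := Real.rpow_pos_of_pos hb0 _
  have hr1 : r < 1 := Real.rpow_lt_one hb0.le hb1 (by norm_num)
  have hbr : r ^ 12 = b := by
    rw [← Real.rpow_natCast, ← Real.rpow_mul hb0.le]
    norm_num
  refine ⟨Cβ * (r ^ 12)⁻¹ * (2 / (1 - r)) ^ 3, by have := sub_pos.2 hr1; positivity, ?_⟩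
  intro T hT
  have hsum := sum_maxDist4_le hCβ.le hr0 hr1 (hbr ▸ hβ) (Icc 1 T)
  rw [Nat.card_Icc, Nat.add_sub_cancel] at hsum
  calc _ ≤ 1 / (T : ℝ) ^ 4 * (T * (Cβ * (r ^ 12)⁻¹ * (2 / (1 - r)) ^ 3)) := by gcongr
    _ = _ := by field_simp

/-- the quadruple sum of β(⌊m/4⌋) over indices in {1,...,T}⁴, with
β exponentially decaying, is O(T), so divided by T⁴ it is ≤ C/T³. -/
theorem stmt14 (Cβ b : ℝ) (βc : ℕ → ℝ) (hCβ : 0 < Cβ) (hb0 : 0 < b) (hb1 : b < 1)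
    (hβ0 : ∀ m, 0 ≤ βc m) (hβ : ∀ m, βc m ≤ Cβ * b ^ m) :
    ∃ C : ℝ, 0 < C ∧ ∀ T : ℕ, 1 ≤ T →
      (1 / (T : ℝ) ^ 4) * ∑ t₁ ∈ Finset.Icc 1 T, ∑ t₂ ∈ Finset.Icc 1 T,
          ∑ s₁ ∈ Finset.Icc 1 T, ∑ s₂ ∈ Finset.Icc 1 T,
            βc (maxDist4 t₁ t₂ s₁ s₂ / 4)
        ≤ C / (T : ℝ) ^ 3 :=
  stmt14_general Cβ b βc hCβ hb0 hb1 hβ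
end
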